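/- Let x₁ < x₂ < … < x_n be n distinct real numbers. Then the set of parameter pairs (α, β) ∈ ℝⁿ × ℝⁿ for which the n × n matrix with entries M_{ij} = σ(αᵢ xⱼ + βᵢ) is singular (has zero determinant) has Lebesgue measure zero in ℝ^{2n}. -/

import Mathlib

/-!
The determinant of the collocation matrix is a real-analytic function of `(α, β)`. A real-analytic
function on `ℝ` that is not identically zero has discrete, hence null, zero set, and Fubini carries
this over to `ℝᵏ` one coordinate at a time. The determinant is not identically zero: for
`α = (t, …, t)` and `β = -t x` the entries are `σ(t (xⱼ - xᵢ))`, which tend as `t → ∞` to an upper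
triangular matrix with diagonal `1/2`.
-/

noncomputable def sigmoid (z : ℝ) : ℝ := 1 / (1 + Real.exp (-z))

open MeasureTheory Filter Set Topology

section NegligibleAnalyticZeros

variable {E F : Type*} [NormedAddCommGroup E] [NormedSpace ℝ E] [MeasurableSpace E]
  [NormedAddCommGroup F] [NormedSpace ℝ F] [MeasurableSpace F]

def NegligibleAnalyticZeros (μ : Measure E) : Prop :=
  ∀ f : E → ℝ, AnalyticOnNhd ℝ f univ → ∀ y₀, f y₀ ≠ 0 → ∀ᵐ y ∂μ, f y ≠ 0

theorem negligibleAnalyticZeros_of_subsingleton [Subsingleton E] (μ : Measure E) :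
    NegligibleAnalyticZeros μ := fun _ _ y₀ hy₀ =>
  ae_of_all μ fun y => Subsingleton.elim y₀ y ▸ hy₀

theorem negligibleAnalyticZeros_real (μ : Measure ℝ) [NullSingletonClass μ] :
    NegligibleAnalyticZeros μ := by
  intro f hf y₀ hy₀
  rcases hf.eqOn_zero_or_eventually_ne_zero_of_preconnected isPreconnected_univ with h | h
  · exact absurd (h (mem_univ y₀)) hy₀
  · have := ae_restrict_le_codiscreteWithin (μ := μ) .univ h
    rwa [Measure.restrict_univ] at this

theorem NegligibleAnalyticZeros.prod {μ : Measure E} {ν : Measure F} [SFinite ν]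
    [OpensMeasurableSpace (E × F)] (hμ : NegligibleAnalyticZeros μ)
    (hν : NegligibleAnalyticZeros ν) : NegligibleAnalyticZeros (μ.prod ν) := by
  intro f hf p₀ hp₀
  have hmeas : MeasurableSet {p | f p ≠ 0} :=
    (measurableSet_singleton 0).compl.preimage (continuousOn_univ.mp hf.continuousOn).measurable
  refine (Measure.ae_prod_iff_ae_ae hmeas).2 ?_
  have hfirst : ∀ᵐ a ∂μ, f (a, p₀.2) ≠ 0 :=
    hμ _ (fun a _ => (hf _ (mem_univ _)).comp (analyticAt_id.prod analyticAt_const)) p₀.1 hp₀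
  filter_upwards [hfirst] with a ha
  exact hν _ (fun b _ => (hf _ (mem_univ _)).comp (analyticAt_const.prod analyticAt_id)) _ ha

theorem NegligibleAnalyticZeros.map {μ : Measure F} (hμ : NegligibleAnalyticZeros μ)
    (e : F ≃ᵐ E) (he : ∀ y, AnalyticAt ℝ e y) : NegligibleAnalyticZeros (μ.map e) := by
  intro f hf x₀ hx₀
  rw [e.measurableEmbedding.ae_map_iff]
  exact hμ (f ∘ e) (fun y _ => (hf _ (mem_univ _)).comp (he y)) (e.symm x₀) (by simpa using hx₀)

theorem negligibleAnalyticZeros_volume_pi (n : ℕ) :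
    NegligibleAnalyticZeros (volume : Measure (Fin n → ℝ)) := by
  induction n with
  | zero => exact negligibleAnalyticZeros_of_subsingleton _
  | succ n ih =>
    have he := (volume_preserving_piFinSuccAbove (fun _ : Fin (n + 1) => ℝ) 0).symm
    rw [← he.map_eq]
    refine ((negligibleAnalyticZeros_real volume).prod ih).map _ fun q => ?_
    simp only [MeasurableEquiv.piFinSuccAbove_symm_apply]
    refine AnalyticAt.pi fun i => Fin.cases ?_ (fun j => ?_) i
    · simpa using analyticAt_fst
    · simp only [Fin.insertNthEquiv_zero, Fin.consEquiv_apply, Fin.cons_succ]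
      exact analyticAt_pi_iff.1 analyticAt_snd j

end NegligibleAnalyticZeros

theorem AnalyticAt.matrix_det {𝕜 E R m : Type*} [NontriviallyNormedField 𝕜]
    [NormedAddCommGroup E] [NormedSpace 𝕜 E] [NormedCommRing R] [NormedAlgebra 𝕜 R]
    [Fintype m] [DecidableEq m] {A : E → Matrix m m R} {z : E}
    (hA : ∀ i j, AnalyticAt 𝕜 (fun w => A w i j) z) : AnalyticAt 𝕜 (fun w => (A w).det) z := by
  simp only [Matrix.det_apply']
  exact Finset.analyticAt_fun_sum _ fun _ _ =>
    analyticAt_const.mul (Finset.analyticAt_fun_prod _ fun i _ => hA _ _)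

theorem sigmoid_eq_real_sigmoid : sigmoid = Real.sigmoid := by
  ext z
  rw [sigmoid, Real.sigmoid_def, one_div]

theorem exists_det_sigmoid_ne_zero {n : ℕ} {x : Fin n → ℝ} (hx : StrictMono x) :
    ∃ p : (Fin n → ℝ) × (Fin n → ℝ),
      (Matrix.of fun i j => Real.sigmoid (p.1 i * x j + p.2 i)).det ≠ 0 := by
  let L : Matrix (Fin n) (Fin n) ℝ := .of fun i j => if i < j then 1 else if i = j then 2⁻¹ else 0
  have hentry (i j : Fin n) :
      Tendsto (fun t => Real.sigmoid (t * x j + -(t * x i))) atTop (𝓝 (L i j)) := by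
    simp only [← mul_neg, ← mul_add, ← sub_eq_add_neg]
    rcases lt_trichotomy i j with hij | rfl | hij
    · simpa [L, hij, Function.comp_def] using Real.tendsto_sigmoid_atTop.comp
        (tendsto_id.atTop_mul_const (sub_pos.2 (hx hij)))
    · simp [L, Real.sigmoid_zero]
    · simpa [L, hij.not_gt, hij.ne', Function.comp_def] using Real.tendsto_sigmoid_atBot.comp
        (tendsto_id.atTop_mul_const_of_neg (sub_neg.2 (hx hij)))
  have hlim : Tendsto (fun t => Matrix.of fun i j => Real.sigmoid (t * x j + -(t * x i))) atTop
      (𝓝 L) :=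
    tendsto_pi_nhds.2 fun i => tendsto_pi_nhds.2 fun j => hentry i j
  have hL : L.det ≠ 0 := by
    rw [Matrix.det_of_isUpperTriangular fun i j (hji : j < i) => by simp [L, hji.not_gt, hji.ne']]
    simp [L]
  obtain ⟨t, ht⟩ := ((continuous_id.matrix_det.tendsto L).comp hlim |>.eventually_ne hL).exists
  exact ⟨(fun _ => t, fun i => -(t * x i)), ht⟩

/-- For distinct nodes `x₁ < ⋯ < xₙ`, the set of parameter pairs `(α, β) ∈ ℝⁿ × ℝⁿ` for which
the ELM collocation matrix `(σ(αᵢ xⱼ + βᵢ))_{ij}` is singular has Lebesgue measure zero. -/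
theorem elm_matrix_singular_measure_zero (n : ℕ) (x : Fin n → ℝ) (hx : StrictMono x) :
    MeasureTheory.volume
      {p : (Fin n → ℝ) × (Fin n → ℝ) |
        Matrix.det (Matrix.of fun i j => sigmoid (p.1 i * x j + p.2 i)) = 0} = 0 := by
  obtain ⟨p₀, hp₀⟩ := exists_det_sigmoid_ne_zero hx
  have hanalytic : AnalyticOnNhd ℝ
      (fun p : (Fin n → ℝ) × (Fin n → ℝ) =>
        (Matrix.of fun i j => Real.sigmoid (p.1 i * x j + p.2 i)).det) univ :=
    fun p _ => AnalyticAt.matrix_det fun i j =>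
      (((analyticAt_pi_iff.1 analyticAt_fst i).mul analyticAt_const).add
        (analyticAt_pi_iff.1 analyticAt_snd i)).sigmoid'
  have hae := (negligibleAnalyticZeros_volume_pi n).prod (negligibleAnalyticZeros_volume_pi n)
    _ hanalytic p₀ hp₀
  rw [← Measure.volume_eq_prod, ae_iff] at hae
  simpa [sigmoid_eq_real_sigmoid] using hae
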